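/- For n ≥ 4, the set A_n = {v_1,...,v_n, u_1,...,u_{n−4}, u_{n−2}, x_1,...,x_{n−4}, x_{n−2}} generates the monoid IOF_n^par; in particular rank(IOF_n^par) ≤ 3n−6. -/

import Mathlib

/-- A partial injection on `{1,...,n}`, represented by its graph. -/
structure PInj (n : ℕ) where
  R : ℕ → ℕ → Prop
  memL : ∀ ⦃x y⦄, R x y → x ∈ Set.Icc 1 n
  memR : ∀ ⦃x y⦄, R x y → y ∈ Set.Icc 1 n
  func : ∀ ⦃x y y'⦄, R x y → R x y' → y = y'
  inj : ∀ ⦃x x' y⦄, R x y → R x' y → x = x'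

namespace PInj

variable {n : ℕ}

@[ext] theorem ext {a b : PInj n} (h : ∀ x y, a.R x y ↔ b.R x y) : a = b := by
  cases a; cases b
  simp only [mk.injEq]
  funext x y
  exact propext (h x y)

instance : Mul (PInj n) :=
  ⟨fun a b =>
    { R := fun x z => ∃ y, a.R x y ∧ b.R y z
      memL := by rintro x z ⟨y, h1, _⟩; exact a.memL h1
      memR := by rintro x z ⟨y, _, h2⟩; exact b.memR h2
      func := by
        rintro x z z' ⟨y, h1, h2⟩ ⟨y', h1', h2'⟩
        obtain rfl := a.func h1 h1'
        exact b.func h2 h2'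
      inj := by
        rintro x x' z ⟨y, h1, h2⟩ ⟨y', h1', h2'⟩
        obtain rfl := b.inj h2 h2'
        exact a.inj h1 h1' }⟩

instance : One (PInj n) :=
  ⟨{ R := fun x y => x ∈ Set.Icc 1 n ∧ y = x
     memL := by rintro x y ⟨h, rfl⟩; exact h
     memR := by rintro x y ⟨h, rfl⟩; exact h
     func := by rintro x y y' ⟨_, rfl⟩ ⟨_, rfl⟩; rfl
     inj := by rintro x x' y ⟨_, rfl⟩ ⟨_, h⟩; exact h }⟩

instance : Monoid (PInj n) where
  mul_assoc a b c := by
    ext x y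
    constructor
    · rintro ⟨z, ⟨w, h1, h2⟩, h3⟩; exact ⟨w, h1, z, h2, h3⟩
    · rintro ⟨w, h1, z, h2, h3⟩; exact ⟨z, ⟨w, h1, h2⟩, h3⟩
  one_mul a := by
    ext x y
    constructor
    · rintro ⟨z, ⟨_, rfl⟩, h⟩; exact h
    · intro h; exact ⟨x, ⟨a.memL h, rfl⟩, h⟩
  mul_one a := by
    ext x y
    constructor
    · rintro ⟨z, h, _, rfl⟩; exact h
    · intro h; exact ⟨y, h, a.memR h, rfl⟩

/-- The inverse of a partial injection. -/
def inv (a : PInj n) : PInj n where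
  R := fun x y => a.R y x
  memL := by intro x y h; exact a.memR h
  memR := by intro x y h; exact a.memL h
  func := by intro x y y' h h'; exact a.inj h h'
  inj := by intro x x' y h h'; exact a.func h h'

/-- The domain of a partial injection. -/
def dom (a : PInj n) : Set ℕ := {x | ∃ y, a.R x y}

/-- The image of a partial injection. -/
def im (a : PInj n) : Set ℕ := {y | ∃ x, a.R x y}

end PInj

/-- The strict fence (zig-zag) order on `{1,...,n}`: `x ≺ y` iff `x` is odd and
`x`, `y` are adjacent.  It is generated by `i ≺ i+1` for odd `i` and `i+1 ≺ i`
for even `i`. -/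
def FenceLt (x y : ℕ) : Prop := Odd x ∧ (y = x + 1 ∨ x = y + 1)

/-- Membership in `IOF_n^par`: order-preserving, parity-preserving,
fence-preserving, and with fence-preserving inverse. -/
def IsIOF {n : ℕ} (a : PInj n) : Prop :=
  (∀ ⦃x y x' y'⦄, a.R x y → a.R x' y' → x < x' → y < y') ∧
  (∀ ⦃x y⦄, a.R x y → x % 2 = y % 2) ∧
  (∀ ⦃x y x' y'⦄, a.R x y → a.R x' y' → FenceLt x x' → FenceLt y y') ∧
  (∀ ⦃x y x' y'⦄, a.R x y → a.R x' y' → FenceLt y y' → FenceLt x x')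

/-- A partial identity: every point of the domain is fixed. -/
def IsPartialId {n : ℕ} (a : PInj n) : Prop := ∀ ⦃x y⦄, a.R x y → y = x

/-- The partial identity `v_i` with domain `{1,...,n} \ {i}`. -/
def vMap (n i : ℕ) : PInj n where
  R := fun x y => x ∈ Set.Icc 1 n ∧ x ≠ i ∧ y = x
  memL := by rintro x y ⟨h, _, rfl⟩; exact h
  memR := by rintro x y ⟨h, _, rfl⟩; exact h
  func := by rintro x y y' ⟨_, _, rfl⟩ ⟨_, _, rfl⟩; rfl
  inj := by rintro x x' y ⟨_, _, rfl⟩ ⟨_, _, h⟩; exact h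

/-- The map `u_i` with domain `{1,...,i} ∪ {i+4,...,n}`, sending `ρ ↦ ρ+2` for
`ρ ≤ i` and `ρ ↦ ρ` for `ρ ≥ i+4`. -/
def uMap (n i : ℕ) : PInj n where
  R := fun x y => x ∈ Set.Icc 1 n ∧ y ∈ Set.Icc 1 n ∧
        ((x ≤ i ∧ y = x + 2) ∨ (i + 4 ≤ x ∧ y = x))
  memL := by rintro x y ⟨h, _, _⟩; exact h
  memR := by rintro x y ⟨_, h, _⟩; exact h
  func := by
    rintro x y y' ⟨_, _, (⟨hx, rfl⟩ | ⟨hx, rfl⟩)⟩ ⟨_, _, (⟨hx', rfl⟩ | ⟨hx', rfl⟩)⟩ <;> omega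
  inj := by
    rintro x x' y ⟨_, _, (⟨hx, rfl⟩ | ⟨hx, rfl⟩)⟩ ⟨_, _, (⟨hx', h'⟩ | ⟨hx', h'⟩)⟩ <;> omega

/-- The set `J_i = {1,...,i} ∪ {i+4,...,n}`. -/
def Jset (n i : ℕ) : Set ℕ := {x | (1 ≤ x ∧ x ≤ i) ∨ (i + 4 ≤ x ∧ x ≤ n)}

/-- `G` is a generating set of the monoid `IOF_n^par`: it consists of elements of
`IOF_n^par` and every element of `IOF_n^par` is a finite product of elements of `G`. -/
def Generates (n : ℕ) (G : Set (PInj n)) : Prop :=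
  (∀ g ∈ G, IsIOF g) ∧
  ∀ a : PInj n, IsIOF a →
    ∃ l : List (PInj n), (∀ b ∈ l, b ∈ G) ∧ l.prod = a

/-- The generating set `A_n = {v_1,...,v_n, u_1,...,u_{n-4}, u_{n-2},
x_1,...,x_{n-4}, x_{n-2}}`. -/
def Agen (n : ℕ) : Set (PInj n) :=
  {a | (∃ i ∈ Set.Icc 1 n, a = vMap n i) ∨
       (∃ i, (i ∈ Set.Icc 1 (n - 4) ∨ i = n - 2) ∧ a = uMap n i) ∨
       (∃ i, (i ∈ Set.Icc 1 (n - 4) ∨ i = n - 2) ∧ a = (uMap n i).inv)}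

/-!
Every `a ∈ IOF_n^par` factors as `a = d * e`, where `e` sends `min x (a x) ↦ a x` and `d` is
the inverse of the analogous map for `a⁻¹`; so it suffices to generate the extensive elements
(`x ≤ a x`). The domain of an element of `IOF_n^par` splits into maximal runs of consecutive
points, each translated rigidly by an even amount, with gaps of at least two between runs on
both sides. If an extensive `a` is not a partial identity, let `[x₀, x₀ + k]` be the run of the
least moved point, with images `[y₀, y₀ + k]`. Then `a = b * s`, where `s` moves
`[y₀ - 2, y₀ + k - 2]` up by two and fixes `[1, y₀ - 4] ∪ [y₀ + k + 2, n]`, and `b = a * s⁻¹`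
is again extensive with a smaller sum of images. The maps `s` are products of generators
(`s = u_q x_{p-2}` in general), and partial identities are products of the `v_i`.
-/

namespace PInj

variable {n : ℕ}

theorem mul_R (a b : PInj n) (x z : ℕ) : (a * b).R x z ↔ ∃ y, a.R x y ∧ b.R y z := Iff.rfl

theorem one_R (x y : ℕ) : (1 : PInj n).R x y ↔ x ∈ Set.Icc 1 n ∧ y = x := Iff.rfl

theorem inv_R (a : PInj n) (x y : ℕ) : a.inv.R x y ↔ a.R y x := Iff.rfl

theorem inv_one : (1 : PInj n).inv = 1 := by
  ext x y
  constructor <;> rintro ⟨h, rfl⟩ <;> exact ⟨h, rfl⟩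

theorem inv_mul (a b : PInj n) : (a * b).inv = b.inv * a.inv := by
  ext x y
  constructor <;> rintro ⟨z, h1, h2⟩ <;> exact ⟨z, h2, h1⟩

theorem mul_inv_mul_of_im_subset {a s : PInj n} (h : a.im ⊆ s.im) : a * s.inv * s = a := by
  ext x y
  constructor
  · rintro ⟨z, ⟨y', hy', hz⟩, hzy⟩
    rwa [s.func hzy hz]
  · intro hxy
    obtain ⟨z, hz⟩ := h ⟨x, hxy⟩
    exact ⟨z, ⟨y, hxy, hz⟩, hz⟩

end PInj

open PInj

namespace IsIOF

variable {n : ℕ} {a b : PInj n} {x y x' y' : ℕ}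

theorem one : IsIOF (1 : PInj n) := by
  refine ⟨?_, fun x y h => by rw [h.2], ?_, ?_⟩ <;>
    rintro x y x' y' ⟨-, rfl⟩ ⟨-, rfl⟩ h <;> exact h

theorem mul (ha : IsIOF a) (hb : IsIOF b) : IsIOF (a * b) := by
  refine ⟨?_, ?_, ?_, ?_⟩
  · rintro x z x' z' ⟨y, h1, h2⟩ ⟨y', h1', h2'⟩ hlt
    exact hb.1 h2 h2' (ha.1 h1 h1' hlt)
  · rintro x z ⟨y, h1, h2⟩
    exact (ha.2.1 h1).trans (hb.2.1 h2)
  · rintro x z x' z' ⟨y, h1, h2⟩ ⟨y', h1', h2'⟩ hf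
    exact hb.2.2.1 h2 h2' (ha.2.2.1 h1 h1' hf)
  · rintro x z x' z' ⟨y, h1, h2⟩ ⟨y', h1', h2'⟩ hf
    exact ha.2.2.2 h1 h1' (hb.2.2.2 h2 h2' hf)

theorem lt_iff (ha : IsIOF a) (h : a.R x y) (h' : a.R x' y') : x < x' ↔ y < y' := by
  refine ⟨fun hlt => ha.1 h h' hlt, fun hlt => ?_⟩
  rcases lt_trichotomy x x' with hx | rfl | hx
  · exact hx
  · exact absurd (a.func h h') hlt.ne
  · exact absurd (ha.1 h' h hx) hlt.not_gt

theorem inv (ha : IsIOF a) : IsIOF a.inv :=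
  ⟨fun _ _ _ _ h h' hlt => (ha.lt_iff h h').2 hlt, fun _ _ h => (ha.2.1 h).symm,
    fun _ _ _ _ h h' hf => ha.2.2.2 h h' hf, fun _ _ _ _ h h' hf => ha.2.2.1 h h' hf⟩

theorem succ_of_succ (ha : IsIOF a) (h : a.R x y) (h' : a.R (x + 1) y') : y' = y + 1 := by
  have hlt : y < y' := ha.1 h h' x.lt_succ_self
  rcases Nat.even_or_odd x with hx | hx
  · have := (ha.2.2.1 h' h ⟨hx.add_one, Or.inr rfl⟩).2
    omega
  · have := (ha.2.2.1 h h' ⟨hx, Or.inl rfl⟩).2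
    omega

theorem add_two_le (ha : IsIOF a) (h : a.R x y) (h' : a.R x' y') (hx : x + 2 ≤ x') :
    y + 2 ≤ y' := by
  have hlt : y < y' := ha.1 h h' (by omega)
  by_contra hy
  obtain rfl : y' = y + 1 := by omega
  have := ha.inv.succ_of_succ (show a.inv.R y x from h) (show a.inv.R (y + 1) x' from h')
  omega

theorem exists_run (ha : IsIOF a) {x y : ℕ} (h : a.R x y) :
    ∃ k, (∀ j ≤ k, a.R (x + j) (y + j)) ∧ x + k + 1 ∉ a.dom := by
  by_cases hnext : x + 1 ∈ a.dom
  · obtain ⟨z, hz⟩ := hnext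
    obtain rfl := ha.succ_of_succ h hz
    obtain ⟨k, hk, hend⟩ := ha.exists_run hz
    refine ⟨k + 1, fun j hj => ?_, by rwa [add_right_comm x 1 k, add_assoc] at hend⟩
    rcases j with _ | j
    · exact h
    · simpa only [add_assoc, add_comm 1 j] using hk j (by omega)
  · exact ⟨0, fun j hj => by obtain rfl := Nat.le_zero.1 hj; exact h, hnext⟩
termination_by n - x
decreasing_by
  have := (a.memL hz).2
  omega

theorem lt_of_min_lt (ha : IsIOF a) (h : a.R x y) (h' : a.R x' y')
    (hlt : min x y < min x' y') : x < x' ∧ y < y' := by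
  rcases lt_trichotomy x x' with hx | rfl | hx
  · exact ⟨hx, ha.1 h h' hx⟩
  · obtain rfl := a.func h h'
    exact absurd hlt (lt_irrefl _)
  · have := ha.1 h' h hx
    omega

theorem succ_of_min_succ (ha : IsIOF a) (h : a.R x y) (h' : a.R x' y')
    (hmin : min x' y' = min x y + 1) : x' = x + 1 ∧ y' = y + 1 := by
  obtain ⟨hx, hy⟩ := ha.lt_of_min_lt h h' (by omega)
  have hx' : x' = x + 1 := by
    by_contra hne
    have := ha.add_two_le h h' (by omega)
    omega
  subst hx'
  exact ⟨rfl, ha.succ_of_succ h h'⟩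

end IsIOF

section Generators

variable {n : ℕ}

theorem isIOF_vMap (i : ℕ) : IsIOF (vMap n i) := by
  refine ⟨?_, fun x y h => by rw [h.2.2], ?_, ?_⟩ <;>
    rintro x y x' y' ⟨-, -, rfl⟩ ⟨-, -, rfl⟩ h <;> exact h

theorem isIOF_uMap (i : ℕ) : IsIOF (uMap n i) := by
  refine ⟨?_, ?_, ?_, ?_⟩
  · rintro x y x' y' ⟨-, -, h⟩ ⟨-, -, h'⟩ hlt
    omega
  · rintro x y ⟨-, -, h⟩
    omega
  · rintro x y x' y' ⟨-, -, h⟩ ⟨-, -, h'⟩ ⟨hodd, hadj⟩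
    rw [Nat.odd_iff] at hodd
    exact ⟨Nat.odd_iff.2 (by omega), by omega⟩
  · rintro x y x' y' ⟨hx, hy, h⟩ ⟨hx', hy', h'⟩ ⟨hodd, hadj⟩
    simp only [Set.mem_Icc] at hx hy hx' hy'
    rw [Nat.odd_iff] at hodd
    exact ⟨Nat.odd_iff.2 (by omega), by omega⟩

theorem isIOF_of_mem_Agen {g : PInj n} (hg : g ∈ Agen n) : IsIOF g := by
  rcases hg with ⟨i, -, rfl⟩ | ⟨i, -, rfl⟩ | ⟨i, -, rfl⟩
  · exact isIOF_vMap i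
  · exact isIOF_uMap i
  · exact (isIOF_uMap i).inv

theorem vMap_inv (i : ℕ) : (vMap n i).inv = vMap n i := by
  ext x y
  constructor <;> rintro ⟨h1, h2, rfl⟩ <;> exact ⟨h1, h2, rfl⟩

theorem inv_mem_Agen {g : PInj n} (hg : g ∈ Agen n) : g.inv ∈ Agen n := by
  rcases hg with ⟨i, hi, rfl⟩ | ⟨i, hi, rfl⟩ | ⟨i, hi, rfl⟩
  · exact Or.inl ⟨i, hi, vMap_inv i⟩
  · exact Or.inr (Or.inr ⟨i, hi, rfl⟩)
  · exact Or.inr (Or.inl ⟨i, hi, rfl⟩)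

theorem inv_mem_closure_Agen {a : PInj n} (ha : a ∈ Submonoid.closure (Agen n)) :
    a.inv ∈ Submonoid.closure (Agen n) := by
  induction ha using Submonoid.closure_induction with
  | mem g hg => exact Submonoid.subset_closure (inv_mem_Agen hg)
  | one => rw [inv_one]; exact one_mem _
  | mul a b _ _ iha ihb => rw [inv_mul]; exact mul_mem ihb iha

theorem isIOF_of_mem_closure {G : Set (PInj n)} (hG : ∀ g ∈ G, IsIOF g) {a : PInj n}
    (ha : a ∈ Submonoid.closure G) : IsIOF a := by
  induction ha using Submonoid.closure_induction with
  | mem g hg => exact hG g hg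
  | one => exact IsIOF.one
  | mul a b _ _ iha ihb => exact iha.mul ihb

theorem generates_of_forall_mem_closure {G : Set (PInj n)} (hG : ∀ g ∈ G, IsIOF g)
    (h : ∀ a, IsIOF a → a ∈ Submonoid.closure G) : Generates n G :=
  ⟨hG, fun a ha => Submonoid.exists_list_of_mem_closure (h a ha)⟩

end Generators

section Ascent

variable {n : ℕ} {a : PInj n}

def IsExtensive (a : PInj n) : Prop := ∀ ⦃x y⦄, a.R x y → x ≤ y

theorem IsIOF.eq_of_min_eq (ha : IsIOF a) {x y x' y' : ℕ} (h : a.R x y) (h' : a.R x' y')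
    (hmin : min x y = min x' y') : x = x' := by
  rcases lt_trichotomy x x' with hx | hx | hx
  · have := ha.1 h h' hx
    omega
  · exact hx
  · have := ha.1 h' h hx
    omega

def ascent (a : PInj n) (ha : IsIOF a) : PInj n where
  R := fun z y => ∃ x, a.R x y ∧ z = min x y
  memL := by
    rintro z y ⟨x, h, rfl⟩
    have hx := a.memL h
    have hy := a.memR h
    simp only [Set.mem_Icc] at *
    omega
  memR := by rintro z y ⟨x, h, rfl⟩; exact a.memR h
  func := by
    rintro z y y' ⟨x, h, rfl⟩ ⟨x', h', hmin⟩
    obtain rfl := ha.eq_of_min_eq h h' hmin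
    exact a.func h h'
  inj := by
    rintro z z' y ⟨x, h, rfl⟩ ⟨x', h', rfl⟩
    rw [a.inj h h']

theorem IsIOF.ascent (ha : IsIOF a) : IsIOF (ascent a ha) := by
  refine ⟨?_, ?_, ?_, ?_⟩
  · rintro z y z' y' ⟨x, h, rfl⟩ ⟨x', h', rfl⟩ hlt
    exact (ha.lt_of_min_lt h h' hlt).2
  · rintro z y ⟨x, h, rfl⟩
    have := ha.2.1 h
    omega
  · rintro z y z' y' ⟨x, h, rfl⟩ ⟨x', h', rfl⟩ ⟨hodd, hadj⟩
    have hpar := ha.2.1 h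
    rw [Nat.odd_iff] at hodd
    refine ⟨Nat.odd_iff.2 (by omega), ?_⟩
    rcases hadj with hadj | hadj
    · exact Or.inl (ha.succ_of_min_succ h h' hadj).2
    · exact Or.inr (ha.succ_of_min_succ h' h hadj).2
  · rintro z y z' y' ⟨x, h, rfl⟩ ⟨x', h', rfl⟩ hf
    have hord := ha.lt_iff h h'
    obtain ⟨hxodd, hx⟩ := ha.2.2.2 h h' hf
    obtain ⟨hyodd, hy⟩ := hf
    rw [Nat.odd_iff] at hxodd hyodd
    exact ⟨Nat.odd_iff.2 (by omega), by omega⟩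

theorem isExtensive_ascent (ha : IsIOF a) : IsExtensive (ascent a ha) := by
  rintro z y ⟨x, -, rfl⟩
  exact min_le_right x y

theorem ascent_inv_inv_mul_ascent (ha : IsIOF a) : (ascent a.inv ha.inv).inv * ascent a ha = a := by
  ext x y
  constructor
  · rintro ⟨z, ⟨y', hy', rfl⟩, ⟨x', h', hmin⟩⟩
    obtain rfl := ha.eq_of_min_eq h' hy' (by rw [← hmin, min_comm])
    exact h'
  · intro h
    exact ⟨min x y, ⟨y, h, min_comm x y⟩, ⟨x, h, rfl⟩⟩

end Ascent

section ShiftSeg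

variable {n : ℕ}

def shiftSeg (n p q : ℕ) : PInj n where
  R := fun x y => x ∈ Set.Icc 1 n ∧ y ∈ Set.Icc 1 n ∧
    ((x + 2 ≤ p ∧ y = x) ∨ (p ≤ x ∧ x ≤ q ∧ y = x + 2) ∨ (q + 4 ≤ x ∧ y = x))
  memL := by rintro x y ⟨h, -, -⟩; exact h
  memR := by rintro x y ⟨-, h, -⟩; exact h
  func := by rintro x y y' ⟨-, -, h⟩ ⟨-, -, h'⟩; omega
  inj := by rintro x x' y ⟨-, -, h⟩ ⟨-, -, h'⟩; omega

theorem shiftSeg_R (p q x y : ℕ) : (shiftSeg n p q).R x y ↔ x ∈ Set.Icc 1 n ∧ y ∈ Set.Icc 1 n ∧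
    ((x + 2 ≤ p ∧ y = x) ∨ (p ≤ x ∧ x ≤ q ∧ y = x + 2) ∨ (q + 4 ≤ x ∧ y = x)) := Iff.rfl

theorem shiftSeg_one (q : ℕ) : shiftSeg n 1 q = uMap n q := by
  ext x y
  simp only [shiftSeg_R, uMap, Set.mem_Icc]
  omega

theorem shiftSeg_two (q : ℕ) : shiftSeg n 2 q = vMap n 1 * uMap n q := by
  ext x y
  simp only [shiftSeg_R, mul_R, vMap, uMap, Set.mem_Icc]
  constructor
  · rintro ⟨hx, hy, h⟩
    exact ⟨x, ⟨hx, by omega, rfl⟩, hx, hy, by omega⟩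
  · rintro ⟨z, ⟨-, hz, rfl⟩, hx, hy, h⟩
    exact ⟨hx, hy, by omega⟩

theorem shiftSeg_eq_uMap_mul_inv {p q : ℕ} (hp : 3 ≤ p) (hpq : p ≤ q)
    (hq : q + 2 ≤ n) : shiftSeg n p q = uMap n q * (uMap n (p - 2)).inv := by
  ext x y
  simp only [shiftSeg_R, mul_R, inv_R, uMap, Set.mem_Icc]
  constructor
  · rintro ⟨hx, hy, h⟩
    refine ⟨if x ≤ q then x + 2 else x, ⟨hx, ?_, ?_⟩, hy, ?_, ?_⟩ <;> split <;> omega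
  · rintro ⟨z, ⟨hx, -, h⟩, hy, -, h'⟩
    exact ⟨hx, hy, by omega⟩

theorem uMap_sub_three : uMap n (n - 3) = vMap n (n - 2) * uMap n (n - 2) := by
  ext x y
  simp only [mul_R, vMap, uMap, Set.mem_Icc]
  constructor
  · rintro ⟨hx, hy, h⟩
    exact ⟨x, ⟨hx, by omega, rfl⟩, hx, hy, by omega⟩
  · rintro ⟨z, ⟨-, hz, rfl⟩, hx, hy, h⟩
    exact ⟨hx, hy, by omega⟩

theorem uMap_mem_closure {i : ℕ} (hi : 1 ≤ i) (hin : i + 2 ≤ n) :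
    uMap n i ∈ Submonoid.closure (Agen n) := by
  have hu : uMap n (n - 2) ∈ Submonoid.closure (Agen n) :=
    Submonoid.subset_closure (Or.inr (Or.inl ⟨n - 2, Or.inr rfl, rfl⟩))
  rcases lt_trichotomy i (n - 3) with hi3 | rfl | hi3
  · exact Submonoid.subset_closure (Or.inr (Or.inl ⟨i, Or.inl ⟨hi, by omega⟩, rfl⟩))
  · rw [uMap_sub_three]
    exact mul_mem (Submonoid.subset_closure (Or.inl ⟨n - 2, ⟨by omega, by omega⟩, rfl⟩)) hu
  · rwa [show i = n - 2 by omega]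

theorem shiftSeg_mem_closure {p q : ℕ} (hp : 1 ≤ p) (hpq : p ≤ q) (hq : q + 2 ≤ n) :
    shiftSeg n p q ∈ Submonoid.closure (Agen n) := by
  have hu := uMap_mem_closure (by omega) hq
  rcases lt_trichotomy p 2 with hp2 | rfl | hp2
  · rwa [show p = 1 by omega, shiftSeg_one]
  · rw [shiftSeg_two]
    exact mul_mem (Submonoid.subset_closure (Or.inl ⟨1, ⟨le_rfl, by omega⟩, rfl⟩)) hu
  · rw [shiftSeg_eq_uMap_mul_inv hp2 hpq hq]
    exact mul_mem hu
      (Submonoid.subset_closure (Or.inr (Or.inr ⟨p - 2, Or.inl ⟨by omega, by omega⟩, rfl⟩)))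

theorem isExtensive_shiftSeg (p q : ℕ) : IsExtensive (shiftSeg n p q) := by
  rintro x y ⟨-, -, h⟩
  omega

theorem isIOF_shiftSeg {p q : ℕ} (hp : 1 ≤ p) (hpq : p ≤ q) (hq : q + 2 ≤ n) :
    IsIOF (shiftSeg n p q) :=
  isIOF_of_mem_closure (fun _ => isIOF_of_mem_Agen) (shiftSeg_mem_closure hp hpq hq)

end ShiftSeg

section ImageSum

variable {n : ℕ}

open Classical in
/-- The image of `x` under `a`, or `0` if `x ∉ a.dom`. -/
noncomputable def imageAt (a : PInj n) (x : ℕ) : ℕ := if h : x ∈ a.dom then h.choose else 0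

noncomputable def imageSum (a : PInj n) : ℕ := ∑ x ∈ Finset.Icc 1 n, imageAt a x

theorem imageAt_of_R {a : PInj n} {x y : ℕ} (h : a.R x y) : imageAt a x = y := by
  have hx : x ∈ a.dom := ⟨y, h⟩
  rw [imageAt, dif_pos hx, a.func hx.choose_spec h]

theorem imageAt_of_notMem_dom {a : PInj n} {x : ℕ} (h : x ∉ a.dom) : imageAt a x = 0 := by
  rw [imageAt, dif_neg h]

theorem imageSum_lt_imageSum {a b : PInj n} (hle : ∀ ⦃x z⦄, b.R x z → ∃ y, a.R x y ∧ z ≤ y)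
    (hlt : ∃ x y z, a.R x y ∧ b.R x z ∧ z < y) : imageSum b < imageSum a := by
  obtain ⟨x₀, y₀, z₀, h₀, h₀', hz₀⟩ := hlt
  refine Finset.sum_lt_sum (fun x _ => ?_) ⟨x₀, Finset.mem_Icc.2 (a.memL h₀), ?_⟩
  · by_cases hx : x ∈ b.dom
    · obtain ⟨z, hz⟩ := hx
      obtain ⟨y, hy, hzy⟩ := hle hz
      rwa [imageAt_of_R hz, imageAt_of_R hy]
    · rw [imageAt_of_notMem_dom hx]
      exact Nat.zero_le _
  · rwa [imageAt_of_R h₀, imageAt_of_R h₀']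

end ImageSum

section Extensive

variable {n : ℕ} {a : PInj n}

theorem prod_map_vMap_R (L : List ℕ) (x y : ℕ) :
    ((L.map (vMap n)).prod).R x y ↔ x ∈ Set.Icc 1 n ∧ x ∉ L ∧ y = x := by
  induction L generalizing x with
  | nil => simp [one_R]
  | cons i L ih =>
    rw [List.map_cons, List.prod_cons, mul_R]
    simp_rw [ih, List.mem_cons, not_or]
    constructor
    · rintro ⟨z, ⟨hx, hxi, rfl⟩, -, hxL, rfl⟩
      exact ⟨hx, ⟨hxi, hxL⟩, rfl⟩
    · rintro ⟨hx, ⟨hxi, hxL⟩, rfl⟩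
      exact ⟨_, ⟨hx, hxi, rfl⟩, hx, hxL, rfl⟩

theorem mem_closure_of_isPartialId (ha : IsPartialId a) : a ∈ Submonoid.closure (Agen n) := by
  classical
  set S := (Finset.Icc 1 n).filter (· ∉ a.dom)
  have hS : ∀ i, i ∈ S.toList ↔ i ∈ Set.Icc 1 n ∧ i ∉ a.dom := by
    simp [S]
  have ha_eq : (S.toList.map (vMap n)).prod = a := by
    ext x y
    rw [prod_map_vMap_R, hS]
    constructor
    · rintro ⟨hx, hdom, rfl⟩
      obtain ⟨y, hy⟩ := not_not.1 fun h => hdom ⟨hx, h⟩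
      rwa [ha hy] at hy
    · intro h
      exact ⟨a.memL h, fun h' => h'.2 ⟨y, h⟩, ha h⟩
  rw [← ha_eq]
  refine list_prod_mem fun b hb => ?_
  obtain ⟨i, hi, rfl⟩ := List.mem_map.1 hb
  exact Submonoid.subset_closure (Or.inl ⟨i, ((hS i).1 hi).1, rfl⟩)

theorem exists_first_moved_run (ha : IsIOF a) (hext : IsExtensive a) (hne : ¬ IsPartialId a) :
    ∃ x₀ y₀ k, x₀ + 2 ≤ y₀ ∧ (∀ ⦃x y⦄, a.R x y → x < x₀ → y = x ∧ x + 2 ≤ x₀) ∧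
      (∀ j ≤ k, a.R (x₀ + j) (y₀ + j)) ∧ x₀ + k + 1 ∉ a.dom := by
  classical
  have hmoved : ∃ x y, a.R x y ∧ x < y := by
    by_contra! h
    exact hne fun x y hxy => le_antisymm (h x y hxy) (hext hxy)
  obtain ⟨y₀, h₀, hlt₀⟩ := Nat.find_spec hmoved
  obtain ⟨k, hrun, hend⟩ := ha.exists_run h₀
  refine ⟨Nat.find hmoved, y₀, k, by have := ha.2.1 h₀; omega, fun x y h hx => ?_, hrun, hend⟩
  have hyx : y = x :=
    (le_antisymm (hext h) (not_lt.1 fun hlt => Nat.find_min hmoved hx ⟨y, h, hlt⟩)).symm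
  refine ⟨hyx, by_contra fun hgap => ?_⟩
  rw [show Nat.find hmoved = x + 1 by omega] at h₀ hlt₀
  have := ha.succ_of_succ h h₀
  omega

theorem exists_shiftSeg_factor (ha : IsIOF a) (hext : IsExtensive a) (hne : ¬ IsPartialId a) :
    ∃ p q, 1 ≤ p ∧ p ≤ q ∧ q + 2 ≤ n ∧
      (∀ ⦃x y⦄, a.R x y → ∃ z, (shiftSeg n p q).R z y ∧ x ≤ z) ∧
      ∃ x y z, a.R x y ∧ (shiftSeg n p q).R z y ∧ z < y := by
  obtain ⟨x₀, y₀, k, hy₀, hlow, hrun, hend⟩ := exists_first_moved_run ha hext hne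
  have h₀ : a.R x₀ y₀ := by simpa using hrun 0 (Nat.zero_le k)
  have hx₀ := (a.memL h₀).1
  have hy₀k := (a.memR (hrun k le_rfl)).2
  refine ⟨y₀ - 2, y₀ + k - 2, by omega, by omega, by omega, fun x y h => ?_,
    x₀, y₀, y₀ - 2, h₀, ⟨⟨by omega, by omega⟩, a.memR h₀, by omega⟩, by omega⟩
  have hx := a.memL h
  have hy := a.memR h
  simp only [shiftSeg_R, Set.mem_Icc] at hx hy ⊢
  rcases lt_or_ge x x₀ with hx₀x | hx₀x
  · obtain ⟨rfl, hgap⟩ := hlow h hx₀x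
    exact ⟨y, ⟨hy, hy, Or.inl ⟨by omega, rfl⟩⟩, le_rfl⟩
  rcases le_or_gt x (x₀ + k) with hxk | hxk
  · have hyx : y = y₀ + (x - x₀) := a.func h (by simpa [hx₀x] using hrun (x - x₀) (by omega))
    exact ⟨y - 2, ⟨by omega, hy, Or.inr (Or.inl ⟨by omega, by omega, by omega⟩)⟩, by omega⟩
  · have hgap : x₀ + k + 2 ≤ x := by
      by_contra hgap
      exact hend ⟨y, by rwa [show x₀ + k + 1 = x by omega]⟩
    have := ha.add_two_le (hrun k le_rfl) h hgap
    exact ⟨y, ⟨hy, hy, Or.inr (Or.inr ⟨by omega, rfl⟩)⟩, hext h⟩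

theorem mem_closure_of_isExtensive (ha : IsIOF a) (hext : IsExtensive a) :
    a ∈ Submonoid.closure (Agen n) := by
  induction hm : imageSum a using Nat.strong_induction_on generalizing a with
  | _ m ih =>
    by_cases hid : IsPartialId a
    · exact mem_closure_of_isPartialId hid
    obtain ⟨p, q, hp, hpq, hq, hfac, hlt⟩ := exists_shiftSeg_factor ha hext hid
    set s := shiftSeg n p q
    have hs : IsIOF s := isIOF_shiftSeg hp hpq hq
    have hb_le : ∀ ⦃x z⦄, (a * s.inv).R x z → ∃ y, a.R x y ∧ z ≤ y := by
      rintro x z ⟨y, hxy, hzy⟩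
      exact ⟨y, hxy, isExtensive_shiftSeg p q hzy⟩
    have hb_ext : IsExtensive (a * s.inv) := by
      rintro x z ⟨y, hxy, hzy⟩
      obtain ⟨z', hz', hxz'⟩ := hfac hxy
      rwa [s.inj hzy hz']
    have hb_lt : imageSum (a * s.inv) < m := by
      obtain ⟨x, y, z, hxy, hzy, hlt⟩ := hlt
      exact hm ▸ imageSum_lt_imageSum hb_le ⟨x, y, z, hxy, ⟨y, hxy, hzy⟩, hlt⟩
    have him : a.im ⊆ s.im := fun y ⟨x, hxy⟩ => (hfac hxy).imp fun _ => And.left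
    rw [← mul_inv_mul_of_im_subset him]
    exact mul_mem (ih _ hb_lt (ha.mul hs.inv) hb_ext rfl) (shiftSeg_mem_closure hp hpq hq)

end Extensive

theorem mem_closure_Agen_of_isIOF {n : ℕ} {a : PInj n} (ha : IsIOF a) :
    a ∈ Submonoid.closure (Agen n) := by
  rw [← ascent_inv_inv_mul_ascent ha]
  exact mul_mem
    (inv_mem_closure_Agen (mem_closure_of_isExtensive ha.inv.ascent (isExtensive_ascent _)))
    (mem_closure_of_isExtensive ha.ascent (isExtensive_ascent _))

theorem generates_Agen (n : ℕ) : Generates n (Agen n) :=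
  generates_of_forall_mem_closure (fun _ => isIOF_of_mem_Agen) fun _ => mem_closure_Agen_of_isIOF

open Classical in
noncomputable def agenFinset (n : ℕ) : Finset (PInj n) :=
  (Finset.Icc 1 n).image (vMap n) ∪ (insert (n - 2) (Finset.Icc 1 (n - 4))).image (uMap n) ∪
    (insert (n - 2) (Finset.Icc 1 (n - 4))).image fun i => (uMap n i).inv

theorem coe_agenFinset (n : ℕ) : (agenFinset n : Set (PInj n)) = Agen n := by
  classical
  ext g
  simp only [agenFinset, Agen, Finset.coe_union, Finset.coe_image, Finset.coe_insert,
    Finset.coe_Icc, Set.mem_union, Set.mem_image, Set.mem_insert_iff, Set.mem_ofPred_eq]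
  aesop

theorem card_agenFinset_le {n : ℕ} (hn : 4 ≤ n) : (agenFinset n).card ≤ 3 * n - 6 := by
  classical
  set I := insert (n - 2) (Finset.Icc 1 (n - 4))
  have hI : I.card ≤ n - 3 := (Finset.card_insert_le _ _).trans (by rw [Nat.card_Icc]; omega)
  calc (agenFinset n).card
      ≤ ((Finset.Icc 1 n).image (vMap n)).card + (I.image (uMap n)).card +
          (I.image fun i => (uMap n i).inv).card :=
        (Finset.card_union_le _ _).trans (by gcongr; exact Finset.card_union_le _ _)
    _ ≤ (Finset.Icc 1 n).card + I.card + I.card := by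
        gcongr <;> exact Finset.card_image_le
    _ ≤ 3 * n - 6 := by rw [Nat.card_Icc]; omega

/-- `A_n` generates `IOF_n^par`; in particular `rank(IOF_n^par) ≤ 3n-6`. -/
theorem stmt14 (n : ℕ) (hn : 4 ≤ n) :
    Generates n (Agen n) ∧
    ∃ G : Finset (PInj n), Generates n (G : Set (PInj n)) ∧ G.card ≤ 3 * n - 6 :=
  ⟨generates_Agen n, agenFinset n, by rw [coe_agenFinset]; exact generates_Agen n,
    card_agenFinset_le hn⟩
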